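/- arXiv:1103.0672 — 5 statements merged into one kernel-verified Lean document; each statement's English description precedes it below -/
import Mathlib

section
/- Let E be a finite-dimensional real vector space, C a subspace of E, and W a subspace complementary to C (i.e. W ∩ C = {0} and W + C = E). Let L be a lagrangian subspace of (Module.Dual ℝ E) × E with respect to the canonical symplectic form ω, and assume {0} × C ⊆ L. Then the following are equivalent: (i) L ∩ ({0} × E) = {0} × C (cleanness); (ii) L ∩ (W⁰ × W) = {0}; (iii) L + (W⁰ × W) = (Module.Dual ℝ E) × E (transversality to the lagrangian subspace Λ^W = W⁰ × W). -/
/-! Isotropy of `L` against `{0} × C` forces the covector part of every element of `L` to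
vanish on `C`; if it also lies in `W⁰`, it vanishes on `W + C = E`. So `L ∩ (W⁰ × W)` consists
of the `(0, w) ∈ L` with `w ∈ W`, and subtracting the `C`-component of an element of
`L ∩ ({0} × E)` produces exactly such an element: this gives the first equivalence. For the
second, `W⁰ × W` is lagrangian as well, and a lagrangian has half the dimension of the ambient
space, so two of them meet in `0` iff they span. -/

open Module

section CommRing

variable (R E : Type*) [CommRing R] [AddCommGroup E] [Module R E]

def canonicalSymplecticForm : LinearMap.BilinForm R (Dual R E × E) :=
  let pairing := (LinearMap.id : Dual R E →ₗ[R] Dual R E).compl₁₂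
    (LinearMap.fst R (Dual R E) E) (LinearMap.snd R (Dual R E) E)
  pairing - pairing.flip

variable {R E}

@[simp]
lemma canonicalSymplecticForm_apply (u v : Dual R E × E) :
    canonicalSymplecticForm R E u v = u.1 v.2 - v.1 u.2 :=
  rfl

lemma canonicalSymplecticForm_isAlt : LinearMap.IsAlt (canonicalSymplecticForm R E) :=
  fun _ => sub_self _

lemma mem_orthogonal_canonicalSymplecticForm_iff {L : Submodule R (Dual R E × E)}
    {u : Dual R E × E} :
    u ∈ (canonicalSymplecticForm R E).orthogonal L ↔ ∀ l ∈ L, u.1 l.2 - l.1 u.2 = 0 := by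
  rw [LinearMap.BilinForm.mem_orthogonal_iff]
  exact forall₂_congr fun l _ => (canonicalSymplecticForm_isAlt (R := R) (E := E)).eq_iff

lemma canonicalSymplecticForm_nondegenerate [Projective R E] :
    (canonicalSymplecticForm R E).Nondegenerate :=
  canonicalSymplecticForm_isAlt.isRefl.nondegenerate_iff_separatingLeft.mpr fun u hu =>
    Prod.ext (LinearMap.ext fun v => by simpa using hu (0, v))
      ((forall_dual_apply_eq_zero_iff R u.2).mp fun q => by simpa using hu (q, 0))

variable {C W : Submodule R E} {L : Submodule R (Dual R E × E)}

lemma fst_mem_dualAnnihilator_of_le_orthogonal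
    (hiso : L ≤ (canonicalSymplecticForm R E).orthogonal L)
    (hcore : (⊥ : Submodule R (Dual R E)).prod C ≤ L) {u : Dual R E × E} (hu : u ∈ L) :
    u.1 ∈ C.dualAnnihilator :=
  (Submodule.mem_dualAnnihilator _).mpr fun c hc => by
    simpa using hiso hu (0, c) (hcore ⟨zero_mem _, hc⟩)

lemma fst_eq_zero_of_le_orthogonal
    (hiso : L ≤ (canonicalSymplecticForm R E).orthogonal L)
    (hcore : (⊥ : Submodule R (Dual R E)).prod C ≤ L) (hWC : Codisjoint W C)
    {u : Dual R E × E} (hu : u ∈ L) (hu1 : u.1 ∈ W.dualAnnihilator) : u.1 = 0 := by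
  have h : u.1 ∈ (W ⊔ C).dualAnnihilator := by
    rw [Submodule.dualAnnihilator_sup_eq]
    exact ⟨hu1, fst_mem_dualAnnihilator_of_le_orthogonal hiso hcore hu⟩
  rwa [hWC.eq_top, Submodule.dualAnnihilator_top, Submodule.mem_bot] at h

theorem inf_prod_top_eq_prod_iff_inf_dualAnnihilator_prod_eq_bot
    (hiso : L ≤ (canonicalSymplecticForm R E).orthogonal L)
    (hcore : (⊥ : Submodule R (Dual R E)).prod C ≤ L) (hWC : IsCompl W C) :
    L ⊓ (⊥ : Submodule R (Dual R E)).prod ⊤ = (⊥ : Submodule R (Dual R E)).prod C ↔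
      L ⊓ W.dualAnnihilator.prod W = ⊥ := by
  constructor
  · intro hclean
    refine eq_bot_iff.mpr fun u ⟨huL, hu1, hu2⟩ => (Submodule.mem_bot R).mpr ?_
    have hfst : u.1 = 0 :=
      fst_eq_zero_of_le_orthogonal hiso hcore hWC.codisjoint huL hu1
    have hsnd : u.2 ∈ C := (hclean.le ⟨huL, hfst, trivial⟩).2
    exact Prod.ext hfst (Submodule.disjoint_def.mp hWC.disjoint _ hu2 hsnd)
  · intro htrans
    refine le_antisymm (fun u ⟨huL, hu1, _⟩ => ?_)
      (le_inf hcore (Submodule.prod_mono le_rfl le_top))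
    obtain ⟨w, c, hw, hc, hwc⟩ := Submodule.codisjoint_iff_exists_add_eq.mp hWC.codisjoint u.2
    have hw0 : ((0 : Dual R E), w) ∈ L ⊓ W.dualAnnihilator.prod W := by
      refine ⟨?_, zero_mem _, hw⟩
      have : u - (0, c) = (0, w) := Prod.ext (by simpa using hu1) (by simp [← hwc])
      exact this ▸ L.sub_mem huL (hcore ⟨zero_mem _, hc⟩)
    rw [htrans, Submodule.mem_bot, Prod.mk_eq_zero] at hw0
    exact ⟨hu1, by rw [← hwc, hw0.2, zero_add]; exact hc⟩

end CommRing

section Field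

variable {K V : Type*} [Field K] [AddCommGroup V] [Module K V]

theorem orthogonal_dualAnnihilator_prod (W : Submodule K V) :
    (canonicalSymplecticForm K V).orthogonal (W.dualAnnihilator.prod W) =
      W.dualAnnihilator.prod W := by
  ext u
  rw [mem_orthogonal_canonicalSymplecticForm_iff]
  constructor
  · intro h
    refine ⟨(Submodule.mem_dualAnnihilator _).mpr fun w hw => ?_,
      (Subspace.forall_mem_dualAnnihilator_apply_eq_zero_iff W u.2).mp fun q hq => ?_⟩
    · simpa using h (0, w) ⟨zero_mem _, hw⟩
    · simpa using h (q, 0) ⟨hq, zero_mem _⟩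
  · rintro ⟨hp, hv⟩ ⟨q, w⟩ ⟨hq, hw⟩
    simp [(Submodule.mem_dualAnnihilator _).mp hp w hw,
      (Submodule.mem_dualAnnihilator _).mp hq _ hv]

variable [FiniteDimensional K V]

theorem Submodule.inf_eq_bot_iff_sup_eq_top_of_finrank_add_eq {s t : Submodule K V}
    (h : finrank K s + finrank K t = finrank K V) : s ⊓ t = ⊥ ↔ s ⊔ t = ⊤ := by
  have hdim := Submodule.finrank_sup_add_finrank_inf_eq s t
  rw [← Submodule.finrank_eq_zero, Submodule.eq_top_iff_finrank_eq]
  have := Submodule.finrank_le (s ⊔ t)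
  omega

namespace LinearMap.BilinForm

variable {B : LinearMap.BilinForm K V} {L M : Submodule K V}

theorem two_mul_finrank_eq_of_orthogonal_eq (hB : B.Nondegenerate) (hL : B.orthogonal L = L) :
    2 * finrank K L = finrank K V := by
  have h := finrank_orthogonal hB L
  rw [hL] at h
  have := Submodule.finrank_le L
  omega

theorem inf_eq_bot_iff_sup_eq_top_of_orthogonal_eq (hB : B.Nondegenerate)
    (hL : B.orthogonal L = L) (hM : B.orthogonal M = M) : L ⊓ M = ⊥ ↔ L ⊔ M = ⊤ := by
  have hLdim := two_mul_finrank_eq_of_orthogonal_eq hB hL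
  have hMdim := two_mul_finrank_eq_of_orthogonal_eq hB hM
  exact Submodule.inf_eq_bot_iff_sup_eq_top_of_finrank_add_eq (by omega)

end LinearMap.BilinForm

end Field

/-- Equivalence theorem (pointwise linear content): for a lagrangian subspace `L` of
`(Module.Dual ℝ E) × E` containing `{0} × C`, with `W` complementary to `C`,
cleanness `L ∩ ({0} × E) = {0} × C` is equivalent to `L ∩ (W⁰ × W) = {0}` and to
`L + (W⁰ × W) = (Module.Dual ℝ E) × E`. -/
theorem clean_iff_transverse_iff_sum
    (E : Type*) [AddCommGroup E] [Module ℝ E] [FiniteDimensional ℝ E]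
    (C W : Submodule ℝ E) (hdisj : W ⊓ C = ⊥) (hspan : W ⊔ C = ⊤)
    (L : Submodule ℝ (Module.Dual ℝ E × E))
    (hLag : ∀ u : Module.Dual ℝ E × E,
      u ∈ L ↔ ∀ l ∈ L, u.1 l.2 - l.1 u.2 = 0)
    (hcore : (⊥ : Submodule ℝ (Module.Dual ℝ E)).prod C ≤ L) :
    (L ⊓ (⊥ : Submodule ℝ (Module.Dual ℝ E)).prod (⊤ : Submodule ℝ E)
        = (⊥ : Submodule ℝ (Module.Dual ℝ E)).prod C
      ↔ L ⊓ W.dualAnnihilator.prod W = ⊥)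
    ∧ (L ⊓ W.dualAnnihilator.prod W = ⊥
      ↔ L ⊔ W.dualAnnihilator.prod W = ⊤) := by
  have hL : (canonicalSymplecticForm ℝ E).orthogonal L = L := by
    ext u
    rw [mem_orthogonal_canonicalSymplecticForm_iff, hLag]
  exact ⟨inf_prod_top_eq_prod_iff_inf_dualAnnihilator_prod_eq_bot hL.ge hcore
      ⟨disjoint_iff.mpr hdisj, codisjoint_iff.mpr hspan⟩,
    LinearMap.BilinForm.inf_eq_bot_iff_sup_eq_top_of_orthogonal_eq
      canonicalSymplecticForm_nondegenerate hL (orthogonal_dualAnnihilator_prod W)⟩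
end

section
/- Let E be a finite-dimensional real vector space and L a lagrangian subspace of (Module.Dual ℝ E) × E with respect to the canonical symplectic form ω. If L ∩ ((Module.Dual ℝ E) × {0}) = {0}, then there exists a unique linear map A : E → Module.Dual ℝ E such that L = {(A v, v) : v ∈ E}, and this A is symmetric: (A v)(w) = (A w)(v) for all v, w ∈ E. -/
/-!
Projection to `E` is injective on `L` because `L` meets the vertical subspace trivially. It is also
surjective: a covector `p` killing the projection of `L` gives `(p, 0)`, which is `ω`-orthogonal to
`L` and hence lies in `L` by maximality, so `p = 0`. Thus `L` is the graph of `A` over `E`, and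
isotropy of the graph says exactly that `A` is symmetric.
-/

open Function

namespace Submodule

variable {R M N : Type*} [Semiring R] [AddCommMonoid M] [AddCommMonoid N] [Module R M] [Module R N]

theorem exists_eq_range_prod_id {L : Submodule R (M × N)}
    (h : Bijective (LinearMap.snd R M N ∘ₗ L.subtype)) :
    ∃ A : N →ₗ[R] M, L = LinearMap.range (A.prod LinearMap.id) := by
  let e := LinearEquiv.ofBijective _ h
  refine ⟨LinearMap.fst R M N ∘ₗ L.subtype ∘ₗ e.symm.toLinearMap, ?_⟩
  have hgraph : L.subtype ∘ₗ e.symm.toLinearMap =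
      (LinearMap.fst R M N ∘ₗ L.subtype ∘ₗ e.symm.toLinearMap).prod LinearMap.id := by
    ext v
    · rfl
    · exact e.apply_symm_apply v
  rw [← hgraph, LinearMap.range_comp_of_range_eq_top _ e.symm.range, range_subtype]

end Submodule

namespace Submodule

variable {R M N : Type*} [Ring R] [AddCommGroup M] [AddCommGroup N] [Module R M] [Module R N]

theorem injective_snd_comp_subtype {L : Submodule R (M × N)}
    (hvert : L ⊓ (⊤ : Submodule R M).prod ⊥ = ⊥) :
    Injective (LinearMap.snd R M N ∘ₗ L.subtype) := by
  rw [← LinearMap.ker_eq_bot, eq_bot_iff]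
  intro x hx
  have hx0 : (x : M × N) ∈ L ⊓ (⊤ : Submodule R M).prod ⊥ := ⟨x.2, trivial, hx⟩
  rw [hvert] at hx0
  exact (mem_bot R).mpr (Subtype.ext hx0)

end Submodule

namespace LinearMap

variable {R M N : Type*} [Semiring R] [AddCommMonoid M] [AddCommMonoid N] [Module R M] [Module R N]

theorem eq_of_range_prod_id_eq {A B : N →ₗ[R] M}
    (h : range (A.prod id) = range (B.prod id)) : A = B := by
  ext v
  obtain ⟨w, hw⟩ : (A v, v) ∈ range (B.prod id) := h ▸ ⟨v, rfl⟩
  obtain ⟨hBA, rfl⟩ := Prod.ext_iff.mp hw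
  exact hBA.symm

end LinearMap

namespace Submodule

variable {K E : Type*} [Field K] [AddCommGroup E] [Module K E]

theorem map_snd_eq_top_of_coisotropic
    {L : Submodule K (Module.Dual K E × E)}
    (hcoiso : ∀ u : Module.Dual K E × E, (∀ l ∈ L, u.1 l.2 - l.1 u.2 = 0) → u ∈ L)
    (hvert : L ⊓ (⊤ : Submodule K (Module.Dual K E)).prod ⊥ = ⊥) :
    L.map (LinearMap.snd K _ E) = ⊤ := by
  rw [← Subspace.dualAnnihilator_inj, dualAnnihilator_top, eq_bot_iff]
  intro p hp
  rw [mem_dualAnnihilator] at hp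
  have hpL : (p, (0 : E)) ∈ L := hcoiso _ fun l hl => by
    simp [hp l.2 ⟨l, hl, rfl⟩]
  have hp0 : (p, (0 : E)) ∈ L ⊓ (⊤ : Submodule K (Module.Dual K E)).prod ⊥ :=
    ⟨hpL, trivial, rfl⟩
  rw [hvert] at hp0
  exact congrArg Prod.fst hp0

end Submodule

namespace LinearMap

variable {R E : Type*} [CommRing R] [AddCommGroup E] [Module R E]

theorem apply_comm_of_isotropic_range_prod_id {A : E →ₗ[R] Module.Dual R E}
    (hiso : ∀ u ∈ range (A.prod id), ∀ l ∈ range (A.prod id), u.1 l.2 - l.1 u.2 = 0)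
    (v w : E) : A v w = A w v :=
  sub_eq_zero.mp (hiso (A v, v) ⟨v, rfl⟩ (A w, w) ⟨w, rfl⟩)

end LinearMap

theorem projectable_lagrangian_is_symmetric_graph_general
    (E : Type*) [AddCommGroup E] [Module ℝ E]
    (L : Submodule ℝ (Module.Dual ℝ E × E))
    (hLag : ∀ u : Module.Dual ℝ E × E,
      u ∈ L ↔ ∀ l ∈ L, u.1 l.2 - l.1 u.2 = 0)
    (hproj : L ⊓ (⊤ : Submodule ℝ (Module.Dual ℝ E)).prod (⊥ : Submodule ℝ E) = ⊥) :
    (∃! A : E →ₗ[ℝ] Module.Dual ℝ E,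
        L = LinearMap.range (A.prod (LinearMap.id : E →ₗ[ℝ] E)))
    ∧ (∀ A : E →ₗ[ℝ] Module.Dual ℝ E,
        L = LinearMap.range (A.prod (LinearMap.id : E →ₗ[ℝ] E)) →
        ∀ v w : E, A v w = A w v) := by
  have hsurj : Surjective (LinearMap.snd ℝ _ E ∘ₗ L.subtype) := by
    rw [← LinearMap.range_eq_top, LinearMap.range_comp, Submodule.range_subtype]
    exact Submodule.map_snd_eq_top_of_coisotropic (fun u => (hLag u).mpr) hproj
  obtain ⟨A, hA⟩ := Submodule.exists_eq_range_prod_id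
    ⟨Submodule.injective_snd_comp_subtype hproj, hsurj⟩
  refine ⟨⟨A, hA, fun B hB => LinearMap.eq_of_range_prod_id_eq (hB.symm.trans hA)⟩, ?_⟩
  intro B hB
  refine LinearMap.apply_comm_of_isotropic_range_prod_id fun u hu l hl => ?_
  rw [← hB] at hu hl
  exact (hLag u).mp hu l hl

/-- A lagrangian subspace `L` of `(Module.Dual ℝ E) × E` (for the canonical symplectic form)
that meets the vertical subspace `(Dual ℝ E) × {0}` trivially is the graph
`{(A v, v) : v ∈ E}` of a unique linear map `A : E → Dual ℝ E`, and this `A` is symmetric. -/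
theorem projectable_lagrangian_is_symmetric_graph
    (E : Type*) [AddCommGroup E] [Module ℝ E] [FiniteDimensional ℝ E]
    (L : Submodule ℝ (Module.Dual ℝ E × E))
    (hLag : ∀ u : Module.Dual ℝ E × E,
      u ∈ L ↔ ∀ l ∈ L, u.1 l.2 - l.1 u.2 = 0)
    (hproj : L ⊓ (⊤ : Submodule ℝ (Module.Dual ℝ E)).prod (⊥ : Submodule ℝ E) = ⊥) :
    (∃! A : E →ₗ[ℝ] Module.Dual ℝ E,
        L = LinearMap.range (A.prod (LinearMap.id : E →ₗ[ℝ] E)))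
    ∧ (∀ A : E →ₗ[ℝ] Module.Dual ℝ E,
        L = LinearMap.range (A.prod (LinearMap.id : E →ₗ[ℝ] E)) →
        ∀ v w : E, A v w = A w v) :=
  projectable_lagrangian_is_symmetric_graph_general E L hLag hproj
end

section
/- Let E₁, E₂, E₃ be Euclidean spaces ℝ^k, ℝ^l, ℝ^m, and let F : E₁ × E₂ → ℝ and G : E₂ × E₃ → ℝ be smooth functions such that ∇₂F(0, x₂) = 0 for all x₂ ∈ E₂. Set ψ(x₃) := ∇₁G(0, x₃). Then for every x₃⁰ ∈ E₃ there exist an open neighborhood U of (0, x₃⁰) in E₁ × E₃, an open neighborhood V of (0, ψ(x₃⁰)) in E₂ × E₂, and a smooth map σ : U → E₂ × E₂ such that, writing σ(p₁,x₃) = (p̄₂(p₁,x₃), x̄₂(p₁,x₃)), for every (p₁,x₃) ∈ U the pair σ(p₁,x₃) lies in V, satisfies p̄₂ = ∇₂F(p₁, x̄₂) and x̄₂ = ∇₁G(p̄₂, x₃), and is the unique element of V satisfying this pair of equations. -/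
/-!
Solutions of the system are the zeros of the residual
`((p₁, x₃), (p̄₂, x̄₂)) ↦ (p̄₂ - ∇₂F(p₁, x̄₂), x̄₂ - ∇₁G(p̄₂, x₃))`. On the slice `p₁ = 0` the
hypothesis `∇₂F(0, ·) = 0` turns it into the shear `(p̄₂, x̄₂) ↦ (p̄₂, x̄₂ - ∇₁G(p̄₂, x₃))`, whose
derivative is invertible, so the implicit function theorem applies at `((0, x₃⁰), (0, ψ x₃⁰))`.
The implicit function is a priori smooth only at the base point; smoothness on a neighbourhood
follows by applying the theorem again at every nearby solution and invoking uniqueness.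
-/

open Set Filter Topology InnerProductSpace

section ImplicitFunction

variable {𝕜 : Type*} [RCLike 𝕜]
  {E₁ : Type*} [NormedAddCommGroup E₁] [NormedSpace 𝕜 E₁]
  {E₂ : Type*} [NormedAddCommGroup E₂] [NormedSpace 𝕜 E₂] [CompleteSpace E₂]
  {F : Type*} [NormedAddCommGroup F] [NormedSpace 𝕜 F]
  {f : E₁ × E₂ → F} {n : WithTop ℕ∞}

theorem ContDiff.isOpen_setOf_isInvertible_fderiv_comp_inr (hf : ContDiff 𝕜 n f) (hn : n ≠ 0) :
    IsOpen {v | (fderiv 𝕜 f v ∘L .inr 𝕜 E₁ E₂).IsInvertible} :=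
  ContinuousLinearEquiv.isOpen.preimage
    (((ContinuousLinearMap.compL 𝕜 E₂ (E₁ × E₂) F).flip (.inr 𝕜 E₁ E₂)).continuous.comp
      (hf.continuous_fderiv hn))

variable [CompleteSpace E₁] [CompleteSpace F]

theorem ContDiff.contDiffAt_of_levelSet_eq_graph (hf : ContDiff 𝕜 n f) (hn : n ≠ 0)
    {U : Set E₁} {V : Set E₂} (hU : IsOpen U) (hV : IsOpen V) {c : F} {ψ : E₁ → E₂}
    (hgraph : ∀ v ∈ U ×ˢ V, f v = c ↔ ψ v.1 = v.2) {z : E₁} (hzU : z ∈ U) (hzV : ψ z ∈ V)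
    (hinv : (fderiv 𝕜 f (z, ψ z) ∘L .inr 𝕜 E₁ E₂).IsInvertible) :
    ContDiffAt 𝕜 n ψ z := by
  have hcd : ContDiffAt 𝕜 n f (z, ψ z) := hf.contDiffAt
  set φ : E₁ → E₂ := hcd.implicitFunction hn hinv
  have hφz : φ z = ψ z := hcd.implicitFunction_apply_self hn hinv
  have hφ : ContDiffAt 𝕜 n φ z := hcd.contDiffAt_implicitFunction hn hinv
  have hφV : ∀ᶠ z' in 𝓝 z, φ z' ∈ V :=
    hφ.continuousAt.preimage_mem_nhds (hV.mem_nhds (hφz ▸ hzV))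
  have hfφ : ∀ᶠ z' in 𝓝 z, f (z', φ z') = f (z, ψ z) :=
    hcd.eventually_apply_implicitFunction hn hinv
  refine hφ.congr_of_eventuallyEq ?_
  filter_upwards [hfφ, hU.mem_nhds hzU, hφV] with z' hz' hz'U hz'V
  exact (hgraph (z', φ z') ⟨hz'U, hz'V⟩).1 (hz'.trans ((hgraph _ ⟨hzU, hzV⟩).2 rfl))

theorem ContDiff.exists_contDiffOn_implicitFunction (hf : ContDiff 𝕜 n f) (hn : n ≠ 0)
    (u : E₁ × E₂) (hu : (fderiv 𝕜 (fun w => f (u.1, w)) u.2).IsInvertible) :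
    ∃ U, IsOpen U ∧ u.1 ∈ U ∧ ∃ V, IsOpen V ∧ u.2 ∈ V ∧ ∃ σ : E₁ → E₂, ContDiffOn 𝕜 n σ U ∧
      ∀ z ∈ U, σ z ∈ V ∧ ∀ w ∈ V, f (z, w) = f u ↔ w = σ z := by
  have hpartial : fderiv 𝕜 (fun w => f (u.1, w)) u.2 = fderiv 𝕜 f u ∘L .inr 𝕜 E₁ E₂ :=
    ((hf.differentiable hn (u.1, u.2)).hasFDerivAt.comp u.2
      (hasFDerivAt_prodMk_right u.1 u.2)).fderiv
  have hinv : (fderiv 𝕜 f u ∘L .inr 𝕜 E₁ E₂).IsInvertible := hpartial ▸ hu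
  have hcd : ContDiffAt 𝕜 n f u := hf.contDiffAt
  set ψ : E₁ → E₂ := hcd.implicitFunction hn hinv
  obtain ⟨U₀, V, hU₀, hu₁, hV, hu₂, hsub⟩ := mem_nhds_prod_iff'.mp
    ((hcd.eventually_apply_eq_iff_implicitFunction hn hinv).and
      ((hf.isOpen_setOf_isInvertible_fderiv_comp_inr hn).mem_nhds hinv))
  have hψ : ContinuousAt ψ u.1 := (hcd.contDiffAt_implicitFunction hn hinv).continuousAt
  have hψu : ψ u.1 = u.2 := hcd.implicitFunction_apply_self hn hinv
  refine ⟨interior (U₀ ∩ ψ ⁻¹' V), isOpen_interior, ?_, V, hV, hu₂, ψ, ?_, ?_⟩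
  · exact mem_interior_iff_mem_nhds.2
      (inter_mem (hU₀.mem_nhds hu₁) (hψ.preimage_mem_nhds (hV.mem_nhds (hψu ▸ hu₂))))
  · intro z hz
    obtain ⟨hzU, hzV⟩ := interior_subset hz
    exact (hf.contDiffAt_of_levelSet_eq_graph hn hU₀ hV (fun v hv => (hsub hv).1) hzU hzV
      (hsub (mk_mem_prod hzU hzV)).2).contDiffWithinAt
  · intro z hz
    obtain ⟨hzU, hzV⟩ := interior_subset hz
    exact ⟨hzV, fun w hw => (hsub (mk_mem_prod hzU hw)).1.trans eq_comm⟩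

end ImplicitFunction

section Gradient

variable {E : Type*} [NormedAddCommGroup E] [NormedSpace ℝ E]
  {H : Type*} [NormedAddCommGroup H] [InnerProductSpace ℝ H] [CompleteSpace H]
  {m n : WithTop ℕ∞}

protected theorem ContDiff.gradient {f : E → H → ℝ} {g : E → H}
    (hf : ContDiff ℝ n (Function.uncurry f)) (hg : ContDiff ℝ m g) (hmn : m + 1 ≤ n) :
    ContDiff ℝ m fun x => gradient (f x) (g x) :=
  (toDual ℝ H).symm.contDiff.comp (hf.fderiv hg hmn)

end Gradient

section Shear

variable {𝕜 : Type*} [NontriviallyNormedField 𝕜]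
  {E : Type*} [NormedAddCommGroup E] [NormedSpace 𝕜 E]
  {F : Type*} [NormedAddCommGroup F] [NormedSpace 𝕜 F]

theorem HasFDerivAt.shear {h : E → F} {h' : E →L[𝕜] F} {w : E × F} (hh : HasFDerivAt h h' w.1) :
    HasFDerivAt (fun w : E × F => (w.1, w.2 - h w.1))
      ((ContinuousLinearEquiv.refl 𝕜 E).skewProd (.refl 𝕜 F) (-h') : E × F →L[𝕜] E × F) w := by
  refine (hasFDerivAt_fst.prodMk (hasFDerivAt_snd.sub (hh.comp w hasFDerivAt_fst))).congr_fderiv ?_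
  ext <;> simp [sub_eq_add_neg]

end Shear

section GeneratingSystem

variable {E₁ E₃ : Type*}
  {E₂ : Type*} [NormedAddCommGroup E₂] [InnerProductSpace ℝ E₂] [CompleteSpace E₂]
  {F : E₁ × E₂ → ℝ} {G : E₂ × E₃ → ℝ}

noncomputable def generatingSystem (F : E₁ × E₂ → ℝ) (G : E₂ × E₃ → ℝ) :
    (E₁ × E₃) × (E₂ × E₂) → E₂ × E₂ := fun v =>
  (v.2.1 - gradient (fun y => F (v.1.1, y)) v.2.2, v.2.2 - gradient (fun p => G (p, v.1.2)) v.2.1)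

theorem generatingSystem_eq_zero_iff {z : E₁ × E₃} {w : E₂ × E₂} :
    generatingSystem F G (z, w) = 0 ↔
      w.1 = gradient (fun y => F (z.1, y)) w.2 ∧ w.2 = gradient (fun p => G (p, z.2)) w.1 := by
  simp only [generatingSystem, Prod.ext_iff, Prod.fst_zero, Prod.snd_zero, sub_eq_zero]

theorem contDiff_generatingSystem [NormedAddCommGroup E₁] [NormedSpace ℝ E₁]
    [NormedAddCommGroup E₃] [NormedSpace ℝ E₃] {m n : WithTop ℕ∞}
    (hF : ContDiff ℝ n F) (hG : ContDiff ℝ n G) (hmn : m + 1 ≤ n) :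
    ContDiff ℝ m (generatingSystem F G) := by
  refine (contDiff_fst.comp contDiff_snd).sub ?_ |>.prodMk <|
    (contDiff_snd.comp contDiff_snd).sub ?_
  · exact ContDiff.gradient (f := fun (v : (E₁ × E₃) × (E₂ × E₂)) y => F (v.1.1, y))
      (hF.comp (by fun_prop)) (by fun_prop) hmn
  · exact ContDiff.gradient (f := fun (v : (E₁ × E₃) × (E₂ × E₂)) p => G (p, v.1.2))
      (hG.comp (by fun_prop)) (by fun_prop) hmn

theorem isInvertible_fderiv_generatingSystem_zero [Zero E₁]
    (hFcrit : ∀ x₂, gradient (fun y => F (0, y)) x₂ = 0) {x₃ : E₃} {w : E₂ × E₂}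
    (hG : DifferentiableAt ℝ (gradient fun p => G (p, x₃)) w.1) :
    (fderiv ℝ (fun w => generatingSystem F G ((0, x₃), w)) w).IsInvertible := by
  have hslice : (fun w => generatingSystem F G ((0, x₃), w)) =
      fun w => (w.1, w.2 - gradient (fun p => G (p, x₃)) w.1) := by
    funext w
    simp only [generatingSystem, hFcrit, sub_zero]
  rw [hslice, hG.hasFDerivAt.shear.fderiv]
  exact ContinuousLinearMap.isInvertible_equiv

end GeneratingSystem

/-- Unique local solution of the system `p̄₂ = ∇₂F(p₁, x̄₂)`, `x̄₂ = ∇₁G(p̄₂, x₃)` for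
generating functions `F`, `G` with `∇₂F(0,·) = 0`, near `p₁ = 0` (implicit function theorem
lemma underlying the monicity of composition of symplectic micromorphisms). -/
theorem implicit_solution_of_generating_system (k l m : ℕ)
    (F : EuclideanSpace ℝ (Fin k) × EuclideanSpace ℝ (Fin l) → ℝ)
    (G : EuclideanSpace ℝ (Fin l) × EuclideanSpace ℝ (Fin m) → ℝ)
    (hF : ContDiff ℝ (⊤ : ℕ∞) F) (hG : ContDiff ℝ (⊤ : ℕ∞) G)
    (hFcrit : ∀ x₂ : EuclideanSpace ℝ (Fin l),
      gradient (fun y => F (0, y)) x₂ = 0) :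
    ∀ x₃0 : EuclideanSpace ℝ (Fin m),
      ∃ U : Set (EuclideanSpace ℝ (Fin k) × EuclideanSpace ℝ (Fin m)),
        IsOpen U ∧ (0, x₃0) ∈ U ∧
      ∃ V : Set (EuclideanSpace ℝ (Fin l) × EuclideanSpace ℝ (Fin l)),
        IsOpen V ∧ (0, gradient (fun p₂ => G (p₂, x₃0)) 0) ∈ V ∧
      ∃ σ : EuclideanSpace ℝ (Fin k) × EuclideanSpace ℝ (Fin m) →
            EuclideanSpace ℝ (Fin l) × EuclideanSpace ℝ (Fin l),
        ContDiffOn ℝ (⊤ : ℕ∞) σ U ∧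
        ∀ z ∈ U,
          σ z ∈ V ∧
          (σ z).1 = gradient (fun y => F (z.1, y)) (σ z).2 ∧
          (σ z).2 = gradient (fun p₂ => G (p₂, z.2)) (σ z).1 ∧
          ∀ w ∈ V,
            (w.1 = gradient (fun y => F (z.1, y)) w.2 ∧
             w.2 = gradient (fun p₂ => G (p₂, z.2)) w.1) → w = σ z := by
  intro x₃0
  set u : (EuclideanSpace ℝ (Fin k) × EuclideanSpace ℝ (Fin m)) ×
      (EuclideanSpace ℝ (Fin l) × EuclideanSpace ℝ (Fin l)) :=
    ((0, x₃0), (0, gradient (fun p₂ => G (p₂, x₃0)) 0))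
  have hGgrad : ContDiff ℝ (⊤ : ℕ∞) (gradient fun p₂ => G (p₂, x₃0)) :=
    ContDiff.gradient (f := fun _ p₂ => G (p₂, x₃0)) (hG.comp (by fun_prop)) contDiff_id (by simp)
  have hu : generatingSystem F G u = 0 := generatingSystem_eq_zero_iff.2 ⟨(hFcrit _).symm, rfl⟩
  obtain ⟨U, hU, hu₁, V, hV, hu₂, σ, hσ, hsol⟩ :=
    (contDiff_generatingSystem (m := (⊤ : ℕ∞)) hF hG (by simp)).exists_contDiffOn_implicitFunction
      (by simp) u
      (isInvertible_fderiv_generatingSystem_zero hFcrit (hGgrad.differentiable (by simp) _))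
  refine ⟨U, hU, hu₁, V, hV, hu₂, σ, hσ, fun z hz => ?_⟩
  obtain ⟨hσV, hsolz⟩ := hsol z hz
  rw [hu] at hsolz
  obtain ⟨hσ₁, hσ₂⟩ := generatingSystem_eq_zero_iff.1 ((hsolz _ hσV).2 rfl)
  exact ⟨hσV, hσ₁, hσ₂, fun w hw hsys => (hsolz w hw).1 (generatingSystem_eq_zero_iff.2 hsys)⟩
end

section
/- Let E₁, E₂, E₃ be Euclidean spaces ℝ^k, ℝ^l, ℝ^m, and let F : E₁ × E₂ → ℝ and G : E₂ × E₃ → ℝ be smooth functions with ∇₂F(0, x₂) = 0 for all x₂ and ∇₂G(0, x₃) = 0 for all x₃; set ψ(x₃) := ∇₁G(0, x₃). Then for every x₃⁰ ∈ E₃ there exist an open neighborhood N_V of (0, ψ(x₃⁰)) in E₁ × E₂ and an open neighborhood N_W of (0, x₃⁰) in E₂ × E₃ such that, defining the relations V := {((p₁, ∇₁F(p₁,x₂)), (∇₂F(p₁,x₂), x₂)) : (p₁,x₂) ∈ N_V} ⊆ (E₁ × E₁) × (E₂ × E₂) and W := {((p₂, ∇₁G(p₂,x₃)), (∇₂G(p₂,x₃),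 x₃)) : (p₂,x₃) ∈ N_W} ⊆ (E₂ × E₂) × (E₃ × E₃), the composition W ∘ V is monic: for every pair (a, c) with a ∈ E₁ × E₁ and c ∈ E₃ × E₃ belonging to the composed relation, there is exactly one b ∈ E₂ × E₂ with (a,b) ∈ V and (b,c) ∈ W. -/
/-!
Write `Φ := ∇₂F` and `Γ := ∇₁G`. An intermediate point `b = (b₁, b₂)` for `(a, c)` satisfies
`b₁ = Φ(a₁, b₂)` and `b₂ = Γ(b₁, c₂)`, so `b₂` is a fixed point of `Γ(Φ(a₁, ·), c₂)`.
Since `Φ(0, ·) ≡ 0`, the partial derivative `∂₂Φ` vanishes along `{0} × E₂`; hence near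
`(0, ψ(x₃⁰))` all slices `Φ(x₁, ·)` are `ε`-Lipschitz, while near `(0, x₃⁰)` all slices `Γ(·, x₃)`
are `K`-Lipschitz for some `K`. With `εK < 1` the composite is a contraction, so it has at most
one fixed point.
-/

open ContinuousLinearMap Topology
open scoped NNReal

theorem eq_of_lipschitzOnWith_of_mul_lt_one {α β : Type*} [MetricSpace α] [MetricSpace β]
    {f : α → β} {g : β → α} {s : Set α} {t : Set β} {K L : ℝ≥0}
    (hf : LipschitzOnWith K f s) (hg : LipschitzOnWith L g t) (hKL : K * L < 1)
    {x x' : α} {y y' : β} (hx : x ∈ s) (hx' : x' ∈ s) (hy : y ∈ t) (hy' : y' ∈ t)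
    (hfx : f x = y) (hfx' : f x' = y') (hgy : g y = x) (hgy' : g y' = x') : x = x' ∧ y = y' := by
  have hdist : dist y y' ≤ (K * L : ℝ≥0) * dist y y' :=
    calc dist y y' = dist (f x) (f x') := by rw [hfx, hfx']
      _ ≤ K * dist x x' := hf.dist_le_mul x hx x' hx'
      _ = K * dist (g y) (g y') := by rw [hgy, hgy']
      _ ≤ K * (L * dist y y') := by gcongr; exact hg.dist_le_mul y hy y' hy'
      _ = (K * L : ℝ≥0) * dist y y' := by push_cast; ring
  have hKL_real : ((K * L : ℝ≥0) : ℝ) < 1 := by exact_mod_cast hKL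
  have hyy' : y = y' := dist_le_zero.1 (by nlinarith [dist_nonneg (x := y) (y := y')])
  exact ⟨by rw [← hgy, ← hgy', hyy'], hyy'⟩

theorem LipschitzOnWith.comp_prodMk_right {α β γ : Type*} [PseudoEMetricSpace α]
    [PseudoEMetricSpace β] [PseudoEMetricSpace γ] {f : α × β → γ} {U : Set (α × β)} {K : ℝ≥0}
    (hf : LipschitzOnWith K f U) (b : β) :
    LipschitzOnWith K (fun a => f (a, b)) {a | (a, b) ∈ U} := by
  have h := hf.comp (LipschitzWith.prodMk_right b).lipschitzOnWith fun _ ha => ha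
  rwa [mul_one] at h

section PartialDerivatives

variable {𝕜 : Type*} [NontriviallyNormedField 𝕜]
  {E F G : Type*} [NormedAddCommGroup E] [NormedSpace 𝕜 E] [NormedAddCommGroup F]
  [NormedSpace 𝕜 F] [NormedAddCommGroup G] [NormedSpace 𝕜 G]

theorem HasStrictFDerivAt.exists_lipschitzOnWith_snd_of_nnnorm_lt {f : E × F → G}
    {f' : E × F →L[𝕜] G} {z : E × F} (hf : HasStrictFDerivAt f f' z) (K : ℝ≥0)
    (hK : ‖f'.comp (inr 𝕜 E F)‖₊ < K) :
    ∃ U ∈ 𝓝 z, ∀ x, LipschitzOnWith K (fun y => f (x, y)) {y | (x, y) ∈ U} := by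
  have hε : 0 < (K : ℝ) - ‖f'.comp (inr 𝕜 E F)‖ := sub_pos.2 hK
  obtain ⟨U, hUo, hzU, hU⟩ := exists_nhds_square (hf.isLittleO.def hε)
  refine ⟨U, hUo.mem_nhds hzU, fun x => lipschitzOnWith_iff_norm_sub_le.2 fun y hy y' hy' => ?_⟩
  have hsub : ((x, y) - (x, y') : E × F) = (0, y - y') := by simp
  have hrem := hU (Set.mk_mem_prod hy hy')
  simp only [Set.mem_ofPred_eq, hsub, Prod.norm_mk, norm_zero, max_eq_right (norm_nonneg _)]
    at hrem
  calc ‖f (x, y) - f (x, y')‖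
      ≤ ‖f'.comp (inr 𝕜 E F) (y - y')‖ + ‖f (x, y) - f (x, y') - f' (0, y - y')‖ :=
        norm_le_norm_add_norm_sub' _ _
    _ ≤ ‖f'.comp (inr 𝕜 E F)‖ * ‖y - y'‖ + ((K : ℝ) - ‖f'.comp (inr 𝕜 E F)‖) * ‖y - y'‖ :=
        add_le_add (le_opNorm _ _) hrem
    _ = K * ‖y - y'‖ := by ring

theorem fderiv_comp_inr_eq_zero {f : E × F → G} {x : E} {y : F}
    (hf : DifferentiableAt 𝕜 f (x, y)) (hconst : ∀ y', f (x, y') = f (x, y)) :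
    (fderiv 𝕜 f (x, y)).comp (inr 𝕜 E F) = 0 := by
  have hslice := hf.hasFDerivAt.comp y (hasFDerivAt_prodMk_right x y)
  have hfun : f ∘ (fun y' => (x, y')) = fun _ => f (x, y) := funext hconst
  rw [hfun] at hslice
  exact hslice.unique (hasFDerivAt_const _ y)

end PartialDerivatives

section PartialGradients

variable {E F : Type*} [NormedAddCommGroup E] [InnerProductSpace ℝ E]
  [NormedAddCommGroup F] [InnerProductSpace ℝ F]

noncomputable def gradFst [CompleteSpace E] (f : E × F → ℝ) : E × F → E :=
  fun z => gradient (fun p => f (p, z.2)) z.1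

noncomputable def gradSnd [CompleteSpace F] (f : E × F → ℝ) : E × F → F :=
  fun z => gradient (fun y => f (z.1, y)) z.2

theorem ContDiff.gradSnd [CompleteSpace F] {f : E × F → ℝ} {m n : WithTop ℕ∞}
    (hf : ContDiff ℝ n f) (hmn : m + 1 ≤ n) : ContDiff ℝ m (_root_.gradSnd f) := by
  have heq : _root_.gradSnd f =
      fun z => (InnerProductSpace.toDual ℝ F).symm ((fderiv ℝ f z).comp (inr ℝ E F)) := by
    funext z
    have hdiff := hf.differentiable (ne_bot_of_le_ne_bot (by simp) hmn) z
    have hslice := hdiff.hasFDerivAt.comp z.2 (hasFDerivAt_prodMk_right (𝕜 := ℝ) z.1 z.2)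
    exact congrArg _ hslice.fderiv
  rw [heq]
  exact (InnerProductSpace.toDual ℝ F).symm.contDiff.comp
    ((hf.fderiv_right hmn).clm_comp contDiff_const)

-- `gradFst f` is definitionally `gradSnd (f ∘ Prod.swap) ∘ Prod.swap`.
theorem ContDiff.gradFst [CompleteSpace E] {f : E × F → ℝ} {m n : WithTop ℕ∞}
    (hf : ContDiff ℝ n f) (hmn : m + 1 ≤ n) : ContDiff ℝ m (_root_.gradFst f) :=
  (ContDiff.gradSnd (hf.comp (contDiff_snd.prodMk contDiff_fst)) hmn).comp
    (contDiff_snd.prodMk contDiff_fst)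

end PartialGradients

theorem mem_image_generatingMap_iff {α β : Type*} {u : α × β → α} {v : α × β → β}
    {N : Set (α × β)} {a : α × α} {b : β × β} :
    (a, b) ∈ (fun z : α × β => ((z.1, u z), (v z, z.2))) '' N ↔
      (a.1, b.2) ∈ N ∧ a.2 = u (a.1, b.2) ∧ b.1 = v (a.1, b.2) := by
  obtain ⟨a₁, a₂⟩ := a
  obtain ⟨b₁, b₂⟩ := b
  constructor
  · rintro ⟨⟨x, y⟩, hxy, h⟩
    simp only [Prod.mk.injEq] at h
    obtain ⟨⟨rfl, rfl⟩, rfl, rfl⟩ := h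
    exact ⟨hxy, rfl, rfl⟩
  · rintro ⟨hN, ha, hb⟩
    exact ⟨(a₁, b₂), hN, by dsimp only at ha hb; rw [ha, hb]⟩

theorem composition_is_monic_general (k l m : ℕ)
    (F : EuclideanSpace ℝ (Fin k) × EuclideanSpace ℝ (Fin l) → ℝ)
    (G : EuclideanSpace ℝ (Fin l) × EuclideanSpace ℝ (Fin m) → ℝ)
    (hF : ContDiff ℝ (⊤ : ℕ∞) F) (hG : ContDiff ℝ (⊤ : ℕ∞) G)
    (hFcrit : ∀ x₂ : EuclideanSpace ℝ (Fin l),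
      gradient (fun y => F (0, y)) x₂ = 0) :
    ∀ x₃0 : EuclideanSpace ℝ (Fin m),
      ∃ NV : Set (EuclideanSpace ℝ (Fin k) × EuclideanSpace ℝ (Fin l)),
        IsOpen NV ∧ (0, gradient (fun p₂ => G (p₂, x₃0)) 0) ∈ NV ∧
      ∃ NW : Set (EuclideanSpace ℝ (Fin l) × EuclideanSpace ℝ (Fin m)),
        IsOpen NW ∧ (0, x₃0) ∈ NW ∧
      ∀ Vrel : Set ((EuclideanSpace ℝ (Fin k) × EuclideanSpace ℝ (Fin k)) ×
                    (EuclideanSpace ℝ (Fin l) × EuclideanSpace ℝ (Fin l))),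
        Vrel = (fun z : EuclideanSpace ℝ (Fin k) × EuclideanSpace ℝ (Fin l) =>
            ((z.1, gradient (fun p => F (p, z.2)) z.1),
             (gradient (fun y => F (z.1, y)) z.2, z.2))) '' NV →
      ∀ Wrel : Set ((EuclideanSpace ℝ (Fin l) × EuclideanSpace ℝ (Fin l)) ×
                    (EuclideanSpace ℝ (Fin m) × EuclideanSpace ℝ (Fin m))),
        Wrel = (fun z : EuclideanSpace ℝ (Fin l) × EuclideanSpace ℝ (Fin m) =>
            ((z.1, gradient (fun p => G (p, z.2)) z.1),
             (gradient (fun y => G (z.1, y)) z.2, z.2))) '' NW →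
      ∀ (a : EuclideanSpace ℝ (Fin k) × EuclideanSpace ℝ (Fin k))
        (c : EuclideanSpace ℝ (Fin m) × EuclideanSpace ℝ (Fin m)),
        (∃ b : EuclideanSpace ℝ (Fin l) × EuclideanSpace ℝ (Fin l),
          (a, b) ∈ Vrel ∧ (b, c) ∈ Wrel) →
        ∃! b : EuclideanSpace ℝ (Fin l) × EuclideanSpace ℝ (Fin l),
          (a, b) ∈ Vrel ∧ (b, c) ∈ Wrel := by
  intro x₃0
  have hΦ : ContDiff ℝ 1 (gradSnd F) := hF.gradSnd (by norm_cast)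
  have hΓ : ContDiff ℝ 1 (gradFst G) := hG.gradFst (by norm_cast)
  set ψ := gradFst G (0, x₃0)
  obtain ⟨K, NW', hNW', hΓlip⟩ :=
    (hΓ.hasStrictFDerivAt (x := (0, x₃0)) one_ne_zero).exists_lipschitzOnWith
  have hΦ_snd : (fderiv ℝ (gradSnd F) (0, ψ)).comp (inr ℝ _ _) = 0 :=
    fderiv_comp_inr_eq_zero (hΦ.differentiable one_ne_zero _) fun y => by
      simp only [gradSnd, hFcrit]
  obtain ⟨NV', hNV', hΦlip⟩ :=
    (hΦ.hasStrictFDerivAt (x := (0, ψ)) one_ne_zero).exists_lipschitzOnWith_snd_of_nnnorm_lt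
      (K + 1)⁻¹ (by rw [hΦ_snd, nnnorm_zero]; positivity)
  have hKK : (K + 1)⁻¹ * K < 1 := by
    rw [inv_mul_lt_one₀ (by positivity)]
    exact lt_add_one K
  obtain ⟨NV, hNV_sub, hNV, hmemV⟩ := mem_nhds_iff.1 hNV'
  obtain ⟨NW, hNW_sub, hNW, hmemW⟩ := mem_nhds_iff.1 hNW'
  refine ⟨NV, hNV, hmemV, NW, hNW, hmemW, ?_⟩
  rintro _ rfl _ rfl a c ⟨b₀, hb₀V, hb₀W⟩
  refine ⟨b₀, ⟨hb₀V, hb₀W⟩, fun b ⟨hbV, hbW⟩ => ?_⟩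
  obtain ⟨hbNV, -, hb₁⟩ := mem_image_generatingMap_iff.1 hbV
  obtain ⟨hbNW, hb₂, -⟩ := mem_image_generatingMap_iff.1 hbW
  obtain ⟨hb₀NV, -, hb₀₁⟩ := mem_image_generatingMap_iff.1 hb₀V
  obtain ⟨hb₀NW, hb₀₂, -⟩ := mem_image_generatingMap_iff.1 hb₀W
  obtain ⟨h₂, h₁⟩ := eq_of_lipschitzOnWith_of_mul_lt_one
    ((hΦlip a.1).mono fun _ hy => hNV_sub hy)
    ((hΓlip.comp_prodMk_right c.2).mono fun _ hp => hNW_sub hp)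
    hKK hbNV hb₀NV hbNW hb₀NW hb₁.symm hb₀₁.symm hb₂.symm hb₀₂.symm
  exact Prod.ext h₁ h₂

/-- Monicity of composition of symplectic micromorphisms in local coordinates: for the
relations `V`, `W` generated by local generating functions `F`, `G` (with the zero section
critical), each point of the composed relation `W ∘ V` comes from a unique intermediate
point. -/
theorem composition_is_monic (k l m : ℕ)
    (F : EuclideanSpace ℝ (Fin k) × EuclideanSpace ℝ (Fin l) → ℝ)
    (G : EuclideanSpace ℝ (Fin l) × EuclideanSpace ℝ (Fin m) → ℝ)
    (hF : ContDiff ℝ (⊤ : ℕ∞) F) (hG : ContDiff ℝ (⊤ : ℕ∞) G)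
    (hFcrit : ∀ x₂ : EuclideanSpace ℝ (Fin l),
      gradient (fun y => F (0, y)) x₂ = 0)
    (hGcrit : ∀ x₃ : EuclideanSpace ℝ (Fin m),
      gradient (fun y => G (0, y)) x₃ = 0) :
    ∀ x₃0 : EuclideanSpace ℝ (Fin m),
      ∃ NV : Set (EuclideanSpace ℝ (Fin k) × EuclideanSpace ℝ (Fin l)),
        IsOpen NV ∧ (0, gradient (fun p₂ => G (p₂, x₃0)) 0) ∈ NV ∧
      ∃ NW : Set (EuclideanSpace ℝ (Fin l) × EuclideanSpace ℝ (Fin m)),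
        IsOpen NW ∧ (0, x₃0) ∈ NW ∧
      ∀ Vrel : Set ((EuclideanSpace ℝ (Fin k) × EuclideanSpace ℝ (Fin k)) ×
                    (EuclideanSpace ℝ (Fin l) × EuclideanSpace ℝ (Fin l))),
        Vrel = (fun z : EuclideanSpace ℝ (Fin k) × EuclideanSpace ℝ (Fin l) =>
            ((z.1, gradient (fun p => F (p, z.2)) z.1),
             (gradient (fun y => F (z.1, y)) z.2, z.2))) '' NV →
      ∀ Wrel : Set ((EuclideanSpace ℝ (Fin l) × EuclideanSpace ℝ (Fin l)) ×
                    (EuclideanSpace ℝ (Fin m) × EuclideanSpace ℝ (Fin m))),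
        Wrel = (fun z : EuclideanSpace ℝ (Fin l) × EuclideanSpace ℝ (Fin m) =>
            ((z.1, gradient (fun p => G (p, z.2)) z.1),
             (gradient (fun y => G (z.1, y)) z.2, z.2))) '' NW →
      ∀ (a : EuclideanSpace ℝ (Fin k) × EuclideanSpace ℝ (Fin k))
        (c : EuclideanSpace ℝ (Fin m) × EuclideanSpace ℝ (Fin m)),
        (∃ b : EuclideanSpace ℝ (Fin l) × EuclideanSpace ℝ (Fin l),
          (a, b) ∈ Vrel ∧ (b, c) ∈ Wrel) →
        ∃! b : EuclideanSpace ℝ (Fin l) × EuclideanSpace ℝ (Fin l),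
          (a, b) ∈ Vrel ∧ (b, c) ∈ Wrel :=
  composition_is_monic_general k l m F G hF hG hFcrit
end

section
/- Let E₁, E₂, E₃ be Euclidean spaces ℝ^k, ℝ^l, ℝ^m, F : E₁ × E₂ → ℝ and G : E₂ × E₃ → ℝ smooth, U ⊆ E₁ × E₃ open, and let p̄₂ : U → E₂ and x̄₂ : U → E₂ be smooth maps satisfying p̄₂(p₁,x₃) = ∇₂F(p₁, x̄₂(p₁,x₃)) and x̄₂(p₁,x₃) = ∇₁G(p̄₂(p₁,x₃), x₃) for all (p₁,x₃) ∈ U. Define (G⋆F)(p₁,x₃) := F(p₁, x̄₂(p₁,x₃)) + G(p̄₂(p₁,x₃), x₃) − ⟨p̄₂(p₁,x₃), x̄₂(p₁,x₃)⟩. Then for all (p₁,x₃) ∈ U: ∇₁(G⋆F)(p₁,x₃) = ∇₁F(p₁, x̄₂(p₁,x₃)) and ∇₂(G⋆F)(p₁,x₃) = ∇₂G(p̄₂(p₁,x₃), x₃). -/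
/-!
`G⋆F` is the value at `(p₂, x₂) = (p̄₂, x̄₂)` of
`Φ(p₁, x₃; p₂, x₂) = F(p₁, x₂) + G(p₂, x₃) − ⟨p₂, x₂⟩`, and the two defining equations say
precisely that `(p̄₂, x̄₂)` is a critical point of `Φ` in the auxiliary variables `(p₂, x₂)`.
By the envelope theorem the derivatives of `G⋆F` are therefore the partial derivatives of `Φ`
in `p₁` and `x₃` with `(p₂, x₂)` frozen, i.e. `∇₁F` and `∇₂G`.
-/

open RealInnerProductSpace ContinuousLinearMap

attribute [local fun_prop] DifferentiableAt.inner

theorem fderiv_envelope {𝕜 E Y Z : Type*} [NontriviallyNormedField 𝕜]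
    [NormedAddCommGroup E] [NormedSpace 𝕜 E] [NormedAddCommGroup Y] [NormedSpace 𝕜 Y]
    [NormedAddCommGroup Z] [NormedSpace 𝕜 Z] {Φ : E × Y → Z} {y : E → Y} {a : E}
    (hΦ : DifferentiableAt 𝕜 Φ (a, y a)) (hy : DifferentiableAt 𝕜 y a)
    (hcrit : HasFDerivAt (fun w => Φ (a, w)) (0 : Y →L[𝕜] Z) (y a)) :
    fderiv 𝕜 (fun t => Φ (t, y t)) a = fderiv 𝕜 (fun t => Φ (t, y a)) a := by
  set Φ' := fderiv 𝕜 Φ (a, y a)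
  have hinr : Φ' ∘L inr 𝕜 E Y = 0 :=
    (hΦ.hasFDerivAt.comp (y a) (hasFDerivAt_prodMk_right a (y a))).unique hcrit
  have htotal : HasFDerivAt (fun t => Φ (t, y t))
      (Φ' ∘L (ContinuousLinearMap.id 𝕜 E).prod (fderiv 𝕜 y a)) a :=
    hΦ.hasFDerivAt.comp a ((hasFDerivAt_id a).prodMk hy.hasFDerivAt)
  have hpartial : HasFDerivAt (fun t => Φ (t, y a)) (Φ' ∘L inl 𝕜 E Y) a :=
    hΦ.hasFDerivAt.comp a (hasFDerivAt_prodMk_left a (y a))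
  rw [htotal.fderiv, hpartial.fderiv]
  ext v
  have hsplit : Φ' (v, fderiv 𝕜 y a v) = Φ' (v, 0) + Φ' (0, fderiv 𝕜 y a v) := by
    rw [← map_add, Prod.mk_add_mk, add_zero, zero_add]
  simpa [hsplit] using congrArg (· (fderiv 𝕜 y a v)) hinr

theorem hasFDerivAt_add_sub_inner_zero {E : Type*} [NormedAddCommGroup E]
    [InnerProductSpace ℝ E] [CompleteSpace E] {f g : E → ℝ} {p x : E}
    (hf : HasGradientAt f p x) (hg : HasGradientAt g x p) :
    HasFDerivAt (fun w : E × E => f w.2 + g w.1 - ⟪w.1, w.2⟫)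
      (0 : E × E →L[ℝ] ℝ) (p, x) := by
  rw [hasGradientAt_iff_hasFDerivAt] at hf hg
  refine ((hf.comp (p, x) hasFDerivAt_snd).add (hg.comp (p, x) hasFDerivAt_fst)
    |>.sub (hasFDerivAt_fst.inner ℝ hasFDerivAt_snd)).congr_fderiv ?_
  ext <;> simp [real_inner_comm]

/-- Gradient identities for the composition `G⋆F` of local generating functions:
if `p̄₂ = ∇₂F(p₁, x̄₂)` and `x̄₂ = ∇₁G(p̄₂, x₃)` on an open set `U`, then the function
`(G⋆F)(p₁,x₃) = F(p₁,x̄₂) + G(p̄₂,x₃) − ⟨p̄₂,x̄₂⟩` satisfies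
`∇₁(G⋆F)(p₁,x₃) = ∇₁F(p₁,x̄₂)` and `∇₂(G⋆F)(p₁,x₃) = ∇₂G(p̄₂,x₃)`. -/
theorem star_generating_function_gradients (k l m : ℕ)
    (F : EuclideanSpace ℝ (Fin k) × EuclideanSpace ℝ (Fin l) → ℝ)
    (G : EuclideanSpace ℝ (Fin l) × EuclideanSpace ℝ (Fin m) → ℝ)
    (hF : ContDiff ℝ (⊤ : ℕ∞) F) (hG : ContDiff ℝ (⊤ : ℕ∞) G)
    (U : Set (EuclideanSpace ℝ (Fin k) × EuclideanSpace ℝ (Fin m)))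
    (hU : IsOpen U)
    (pbar xbar : EuclideanSpace ℝ (Fin k) × EuclideanSpace ℝ (Fin m) →
      EuclideanSpace ℝ (Fin l))
    (hpbar : ContDiffOn ℝ (⊤ : ℕ∞) pbar U)
    (hxbar : ContDiffOn ℝ (⊤ : ℕ∞) xbar U)
    (heq1 : ∀ z ∈ U, pbar z = gradient (fun y => F (z.1, y)) (xbar z))
    (heq2 : ∀ z ∈ U, xbar z = gradient (fun p => G (p, z.2)) (pbar z)) :
    ∀ z ∈ U,
      gradient (fun p₁ => F (p₁, xbar (p₁, z.2)) + G (pbar (p₁, z.2), z.2)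
          - ⟪pbar (p₁, z.2), xbar (p₁, z.2)⟫) z.1
        = gradient (fun p₁ => F (p₁, xbar z)) z.1 ∧
      gradient (fun x₃ => F (z.1, xbar (z.1, x₃)) + G (pbar (z.1, x₃), x₃)
          - ⟪pbar (z.1, x₃), xbar (z.1, x₃)⟫) z.2
        = gradient (fun x₃ => G (pbar z, x₃)) z.2 := by
  rintro ⟨a, b⟩ hz
  have hFd : Differentiable ℝ F := hF.differentiable (by simp)
  have hGd : Differentiable ℝ G := hG.differentiable (by simp)
  have hPd : DifferentiableAt ℝ pbar (a, b) :=
    (hpbar.contDiffAt (hU.mem_nhds hz)).differentiableAt (by simp)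
  have hXd : DifferentiableAt ℝ xbar (a, b) :=
    (hxbar.contDiffAt (hU.mem_nhds hz)).differentiableAt (by simp)
  have hFgrad : HasGradientAt (fun y => F (a, y)) (pbar (a, b)) (xbar (a, b)) :=
    heq1 _ hz ▸ (show DifferentiableAt ℝ (fun y => F (a, y)) _ by fun_prop).hasGradientAt
  have hGgrad : HasGradientAt (fun p => G (p, b)) (xbar (a, b)) (pbar (a, b)) :=
    heq2 _ hz ▸ (show DifferentiableAt ℝ (fun p => G (p, b)) _ by fun_prop).hasGradientAt
  have hcrit := hasFDerivAt_add_sub_inner_zero hFgrad hGgrad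
  constructor
  · unfold gradient
    rw [fderiv_envelope (Φ := fun q => F (q.1, q.2.2) + G (q.2.1, b) - ⟪q.2.1, q.2.2⟫)
      (y := fun t => (pbar (t, b), xbar (t, b))) (by fun_prop) (by fun_prop) hcrit]
    dsimp only
    rw [fderiv_sub_const, fderiv_add_const]
  · unfold gradient
    rw [fderiv_envelope (Φ := fun q => F (a, q.2.2) + G (q.2.1, q.1) - ⟪q.2.1, q.2.2⟫)
      (y := fun s => (pbar (a, s), xbar (a, s))) (by fun_prop) (by fun_prop) hcrit]
    dsimp only
    rw [fderiv_sub_const, fderiv_const_add]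
end
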